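/- Let ψ be a smooth cutoff with ψ̂(0)=1, ψ_ε(x) = ε^{-2} ψ(x/ε), and σ_ε = Σ_{k ∈ ℤ²∖{0}} ψ̂_ε(k)² / |k|² where ψ̂_ε(k) = ψ̂(εk). Then σ_ε ≍ |log ε| as ε → 0, i.e. there exist constants 0 < c < C such that c |log ε| ≤ σ_ε ≤ C |log ε| for all sufficiently small ε > 0. -/

import Mathlib

noncomputable section
open scoped BigOperators ENNReal NNReal Real FourierTransform
open MeasureTheory Complex

namespace PaperDefs

instance fact2pi : Fact (0 < 2 * Real.pi) := ⟨by positivity⟩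

/-- Frequencies (Fourier modes) on the `d`-dimensional torus. -/
abbrev Freq (d : ℕ) := Fin d → ℤ

/-- A distribution on the torus, represented by its Fourier coefficients. -/
abbrev Coeff (d : ℕ) := Freq d → ℂ

/-- The `d`-dimensional torus of side `2π`. -/
abbrev Torus (d : ℕ) := Fin d → AddCircle (2 * Real.pi)

def toR {d : ℕ} (k : Freq d) : EuclideanSpace ℝ (Fin d) := WithLp.toLp 2 (fun i => (k i : ℝ))

/-- A dyadic partition of unity `(χ, ρ)` on `ℝ^d`. -/
structure DyadicPartition (d : ℕ) where
  chi : EuclideanSpace ℝ (Fin d) → ℝ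
  rho : EuclideanSpace ℝ (Fin d) → ℝ
  smooth_chi : ContDiff ℝ (⊤ : ℕ∞) chi
  smooth_rho : ContDiff ℝ (⊤ : ℕ∞) rho
  nonneg_chi : ∀ x, 0 ≤ chi x
  nonneg_rho : ∀ x, 0 ≤ rho x
  radial_chi : ∀ x y, ‖x‖ = ‖y‖ → chi x = chi y
  radial_rho : ∀ x y, ‖x‖ = ‖y‖ → rho x = rho y
  c : ℝ
  a : ℝ
  b : ℝ
  c_pos : 0 < c
  a_pos : 0 < a
  a_lt_b : a < b
  supp_chi : ∀ x, chi x ≠ 0 → ‖x‖ ≤ c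
  supp_rho : ∀ x, rho x ≠ 0 → a ≤ ‖x‖ ∧ ‖x‖ ≤ b
  partition_unity : ∀ x, chi x + ∑' j : ℕ, rho ((2:ℝ) ^ (-(j:ℤ)) • x) = 1
  disj_chi_rho : ∀ j : ℕ, 1 ≤ j → ∀ x, chi x * rho ((2:ℝ) ^ (-(j:ℤ)) • x) = 0
  disj_rho_rho : ∀ i j : ℕ, (i:ℤ) + 1 < (j:ℤ) → ∀ x,
    rho ((2:ℝ) ^ (-(i:ℤ)) • x) * rho ((2:ℝ) ^ (-(j:ℤ)) • x) = 0

variable {d : ℕ}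

/-- `rhoAt P n` is the Littlewood–Paley multiplier `ρ_{n-1}` (shifted index: `n = 0`
corresponds to the block `Δ_{-1}` given by `χ`). -/
def rhoAt (P : DyadicPartition d) : ℕ → EuclideanSpace ℝ (Fin d) → ℝ
  | 0 => P.chi
  | (n+1) => fun x => P.rho ((2:ℝ) ^ (-(n:ℤ)) • x)

/-- The character `e^{i⟨k,x⟩}` on the torus. -/
def char (k : Freq d) (x : Torus d) : ℂ := ∏ i, (fourier (k i) (x i))

/-- The function associated to a family of Fourier coefficients. -/
def toFun (f : Coeff d) (x : Torus d) : ℂ := ∑' k : Freq d, f k * char k x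

/-- Sup norm of a function on the torus, valued in `ℝ≥0∞`. -/
def supNormT (u : Torus d → ℂ) : ℝ≥0∞ := ⨆ x, (‖u x‖₊ : ℝ≥0∞)

/-- The Littlewood–Paley block `Δ_{n-1}` acting on Fourier coefficients. -/
def blockC (P : DyadicPartition d) (n : ℕ) (f : Coeff d) : Coeff d :=
  fun k => (rhoAt P n (toR k) : ℂ) * f k

/-- The Littlewood–Paley block `Δ_{n-1} f` as a function on the torus. -/
def blockFn (P : DyadicPartition d) (n : ℕ) (f : Coeff d) : Torus d → ℂ :=
  toFun (blockC P n f)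

/-- The weight `2^{jγ}` for the (shifted) block index `n = j + 1`. -/
def weight (γ : ℝ) (n : ℕ) : ℝ≥0∞ := ENNReal.ofReal ((2:ℝ) ^ (γ * ((n:ℝ) - 1)))

/-- Besov `B^γ_{∞,∞}` norm of a distribution given by its Fourier coefficients. -/
def besovC (P : DyadicPartition d) (γ : ℝ) (f : Coeff d) : ℝ≥0∞ :=
  ⨆ n : ℕ, weight γ n * supNormT (blockFn P n f)

/-- `L^∞` norm of a distribution (via the sum of its Littlewood–Paley blocks). -/
def linfC (P : DyadicPartition d) (f : Coeff d) : ℝ≥0∞ :=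
  supNormT (fun x => ∑' n : ℕ, blockFn P n f x)

/-- Fourier coefficients of a pointwise product (convolution of coefficients). -/
def mulC (u v : Coeff d) : Coeff d := fun k => ∑' l : Freq d, u l * v (k - l)

/-- Bony paraproduct `f ≺ g` at the level of Fourier coefficients:
`f ≺ g = Σ_{j} Σ_{i ≤ j-2} Δ_i f Δ_j g` (shifted indices `m = i+1`, `n = j+1`). -/
def paraC (P : DyadicPartition d) (f g : Coeff d) : Coeff d :=
  fun k => ∑' n : ℕ, ∑' m : ℕ,
    if m + 2 ≤ n then mulC (blockC P m f) (blockC P n g) k else 0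

/-- Resonant product `f ∘ g = Σ_{|i-j| ≤ 1} Δ_i f Δ_j g` at the level of coefficients. -/
def resoC (P : DyadicPartition d) (f g : Coeff d) : Coeff d :=
  fun k => ∑' n : ℕ, ∑' m : ℕ,
    if m ≤ n + 1 ∧ n ≤ m + 1 then mulC (blockC P m f) (blockC P n g) k else 0

/-- Full product `f g = Σ_{i,j} Δ_i f Δ_j g` at the level of coefficients. -/
def prodC (P : DyadicPartition d) (f g : Coeff d) : Coeff d :=
  fun k => ∑' n : ℕ, ∑' m : ℕ, mulC (blockC P m f) (blockC P n g) k

/-- Volume of the torus. -/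
def torusVol (d : ℕ) : ℝ := (2 * Real.pi) ^ d

/-- Fourier coefficient of a function on the torus. -/
def fourierCoeffT (u : Torus d → ℂ) (k : Freq d) : ℂ :=
  (torusVol d)⁻¹ • ∫ x : Torus d, u x * (starRingEnd ℂ) (char k x)

/-- The (periodized) kernel of the Littlewood–Paley block `Δ_{n-1}`. -/
def KT (P : DyadicPartition d) (n : ℕ) (w : Torus d) : ℂ :=
  ∑' k : Freq d, (rhoAt P n (toR k) : ℂ) * char k w

/-- Littlewood–Paley block of a function on the torus, via convolution with `KT`. -/
def blockT (P : DyadicPartition d) (n : ℕ) (u : Torus d → ℂ) (x : Torus d) : ℂ :=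
  (torusVol d)⁻¹ • ∫ y : Torus d, KT P n (x - y) * u y

/-- Besov `B^γ_{∞,∞}` norm of a function on the torus. -/
def besovT (P : DyadicPartition d) (γ : ℝ) (u : Torus d → ℂ) : ℝ≥0∞ :=
  ⨆ n : ℕ, weight γ n * supNormT (blockT P n u)

/-- Besov norm of a real-valued function on the torus. -/
def besovR (P : DyadicPartition d) (γ : ℝ) (u : Torus d → ℝ) : ℝ≥0∞ :=
  besovT P γ (fun x => (u x : ℂ))

/-- Bony paraproduct of two functions on the torus. -/
def paraT (P : DyadicPartition d) (u v : Torus d → ℂ) (x : Torus d) : ℂ :=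
  ∑' n : ℕ, ∑' m : ℕ, if m + 2 ≤ n then blockT P m u x * blockT P n v x else 0

/-- `|k|²` for a frequency `k`. -/
def freqSq (k : Freq d) : ℝ := ∑ i, ((k i : ℝ))^2

/-- The heat semigroup `e^{ηΔt}` acting on Fourier coefficients. -/
def heat (η t : ℝ) (f : Coeff d) : Coeff d :=
  fun k => ((Real.exp (-(η * freqSq k * t)) : ℝ) : ℂ) * f k

/-- `sup_{t ∈ [0,T]} N (u t)`, for a norm `N` on the state space. -/
def supT {X : Type*} (T : ℝ) (N : X → ℝ≥0∞) (u : ℝ → X) : ℝ≥0∞ :=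
  ⨆ t ∈ Set.Icc (0:ℝ) T, N (u t)

/-- `β`-Hölder seminorm in time on `[0,T]` with respect to a norm `N`. -/
def holT {X : Type*} [Sub X] (T β : ℝ) (N : X → ℝ≥0∞) (u : ℝ → X) : ℝ≥0∞ :=
  ⨆ s ∈ Set.Icc (0:ℝ) T, ⨆ t ∈ Set.Icc (0:ℝ) T,
    N (u t - u s) / ENNReal.ofReal (|t - s| ^ β)

end PaperDefs

namespace PaperDefs
/-- The renormalization constant `σ_ε = Σ_{k ∈ ℤ²∖{0}} ψ̂(εk)² / |k|²`. -/
def sigmaEps (φ : EuclideanSpace ℝ (Fin 2) → ℝ) (ε : ℝ) : ℝ :=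
  ∑' k : Freq 2, if k = 0 then 0 else (φ (ε • toR k))^2 / ‖toR k‖^2
end PaperDefs

namespace Statement16Aux
open Finset PaperDefs

lemma harm_low (N : ℕ) : Real.log (N+1) ≤ ∑ d ∈ Finset.Icc 1 N, (d:ℝ)⁻¹ := by
  have h := log_add_one_le_harmonic N
  have he : ((harmonic N : ℚ) : ℝ) = ∑ d ∈ Finset.Icc 1 N, (d:ℝ)⁻¹ := by
    rw [harmonic_eq_sum_Icc]; push_cast; rfl
  rw [he] at h; exact_mod_cast h

lemma harm_up (N : ℕ) : ∑ d ∈ Finset.Icc 1 N, (d:ℝ)⁻¹ ≤ 1 + Real.log N := by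
  have h := harmonic_le_one_add_log N
  have he : ((harmonic N : ℚ) : ℝ) = ∑ d ∈ Finset.Icc 1 N, (d:ℝ)⁻¹ := by
    rw [harmonic_eq_sum_Icc]; push_cast; rfl
  rw [he] at h; exact_mod_cast h

lemma cube_tail (M : ℕ) (hM : 1 ≤ M) :
    ∀ m : ℕ, ∑ n ∈ Finset.Ioc M m, ((n:ℝ)^3)⁻¹ ≤ ((M:ℝ)^2)⁻¹ := by
  have key : ∀ m : ℕ, ∑ n ∈ Finset.Ioc M m, ((n:ℝ)^3)⁻¹
      ≤ ((M:ℝ)^2)⁻¹ - (((max M m : ℕ):ℝ)^2)⁻¹ := by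
    intro m; induction m with
    | zero => simp [Finset.Ioc_eq_empty_of_le (Nat.zero_le M), Nat.max_eq_left (Nat.zero_le M)]
    | succ m ih =>
      rcases le_or_gt (m+1) M with h | h
      · rw [Finset.Ioc_eq_empty_of_le (by omega), Nat.max_eq_left (by omega)]
        simp
      · have hMm : M ≤ m := by omega
        rw [Finset.sum_Ioc_succ_top hMm, Nat.max_eq_right (by omega)]
        rw [Nat.max_eq_right hMm] at ih
        have hm1 : (1:ℝ) ≤ (m:ℝ) := by exact_mod_cast le_trans hM hMm
        have hstep : (((m:ℝ)+1)^3)⁻¹ ≤ ((m:ℝ)^2)⁻¹ - (((m:ℝ)+1)^2)⁻¹ := by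
          rw [le_sub_iff_add_le, ← one_div, ← one_div, ← one_div,
            div_add_div _ _ (by positivity) (by positivity),
            div_le_div_iff₀ (by positivity) (by positivity)]
          nlinarith [sq_nonneg (m:ℝ)]
        push_cast
        linarith
  intro m
  calc ∑ n ∈ Finset.Ioc M m, ((n:ℝ)^3)⁻¹
      ≤ ((M:ℝ)^2)⁻¹ - (((max M m : ℕ):ℝ)^2)⁻¹ := key m
    _ ≤ _ := by
        have h0 : (0:ℝ) ≤ (((max M m : ℕ):ℝ)^2)⁻¹ := by positivity
        linarith

/-- embed a pair of integers as a frequency -/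
noncomputable def v (a b : ℤ) : Freq 2 := ![a, b]

lemma v_inj {a b a' b' : ℤ} (h : v a b = v a' b') : a = a' ∧ b = b' :=
  ⟨congrFun h 0, congrFun h 1⟩

lemma k_eq_v (k : Freq 2) : k = v (k 0) (k 1) := by
  funext i; fin_cases i <;> rfl

lemma v_ne_zero {a b : ℤ} (ha : a ≠ 0) : v a b ≠ 0 := by
  intro h
  exact ha (congrFun h 0)

lemma norm_v_sq (a b : ℤ) : ‖toR (v a b)‖^2 = (a:ℝ)^2 + (b:ℝ)^2 := by
  rw [EuclideanSpace.norm_eq, Real.sq_sqrt (by positivity)]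
  simp [toR, v, Fin.sum_univ_two, Real.norm_eq_abs, _root_.sq_abs]


variable (φ : SchwartzMap (EuclideanSpace ℝ (Fin 2)) ℝ) (ε : ℝ)

/-- the summand of `sigmaEps` -/
noncomputable def F : Freq 2 → ℝ :=
  fun k => if k = 0 then 0 else (φ (ε • toR k))^2 / ‖toR k‖^2

lemma F_nonneg (k : Freq 2) : 0 ≤ F φ ε k := by
  unfold F; split
  · exact le_refl 0
  · positivity

lemma sigma_eq : sigmaEps (fun x => φ x) ε = ∑' k, F φ ε k := rfl

lemma F_key (hε : 0 < ε) {C₀ C₁ : ℝ} (hC₀ : ∀ x, |φ x| ≤ C₀) (hC₁ : ∀ x, ‖x‖ * |φ x| ≤ C₁)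
    (k : Freq 2) (c : ℤ) (hc : c ≠ 0) (hle : (c:ℝ)^2 ≤ ‖toR k‖^2) :
    F φ ε k ≤ min (C₀^2) (C₁^2 / (ε^2 * (c:ℝ)^2)) / (c:ℝ)^2 := by
  have hcR : ((c:ℝ)) ≠ 0 := Int.cast_ne_zero.mpr hc
  have hc2 : (0:ℝ) < (c:ℝ)^2 := by positivity
  by_cases hk : k = 0
  · rw [F, if_pos hk]
    have : (0:ℝ) ≤ min (C₀^2) (C₁^2 / (ε^2 * (c:ℝ)^2)) := by positivity
    positivity
  · rw [F, if_neg hk]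
    set x := ε • toR k with hx
    have hn2 : (0:ℝ) < ‖toR k‖^2 := lt_of_lt_of_le hc2 hle
    have hxn : ‖x‖^2 = ε^2 * ‖toR k‖^2 := by
      rw [hx, norm_smul, mul_pow, Real.norm_eq_abs, _root_.sq_abs]
    have hx2 : (0:ℝ) < ‖x‖^2 := by
      rw [hxn]; positivity
    have hPa : (φ x)^2 ≤ C₀^2 := by
      rw [← _root_.sq_abs (φ x)]
      exact pow_le_pow_left₀ (abs_nonneg _) (hC₀ x) 2
    have hPb : (φ x)^2 ≤ C₁^2 / (ε^2 * (c:ℝ)^2) := by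
      have h1 : (φ x)^2 * ‖x‖^2 ≤ C₁^2 := by
        calc (φ x)^2 * ‖x‖^2 = (‖x‖ * |φ x|) * (‖x‖ * |φ x|) := by
              rw [← _root_.sq_abs (φ x)]; ring
          _ ≤ C₁ * C₁ := mul_self_le_mul_self (by positivity) (hC₁ x)
          _ = C₁^2 := by ring
      have h2 : ε^2 * (c:ℝ)^2 ≤ ‖x‖^2 := by
        rw [hxn]
        have := sq_nonneg ε
        nlinarith
      calc (φ x)^2 ≤ C₁^2 / ‖x‖^2 := by
            rw [le_div_iff₀ hx2]; exact h1
        _ ≤ C₁^2 / (ε^2 * (c:ℝ)^2) := by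
            apply div_le_div_of_nonneg_left (by positivity) (by positivity) h2
    exact div_le_div₀ (by positivity) (le_min hPa hPb) hc2 hle

noncomputable def box (m : ℕ) : Finset (Freq 2) :=
  ((Finset.Icc (-(m:ℤ)) m) ×ˢ (Finset.Icc (-(m:ℤ)) m)).image (fun p => v p.1 p.2)

lemma subset_box (s : Finset (Freq 2)) : ∃ m : ℕ, s ⊆ box m := by
  refine ⟨s.sup (fun j => max (j 0).natAbs (j 1).natAbs), fun k hk => ?_⟩
  have hsup := @Finset.le_sup _ _ _ _ s (fun j => max (j 0).natAbs (j 1).natAbs) k hk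
  obtain ⟨n, hn⟩ : ∃ n : ℕ, s.sup (fun j => max (j 0).natAbs (j 1).natAbs) = n := ⟨_, rfl⟩
  rw [hn] at hsup ⊢
  have h0 : (k 0).natAbs ≤ n := le_trans (le_max_left _ _) hsup
  have h1 : (k 1).natAbs ≤ n := le_trans (le_max_right _ _) hsup
  clear hn hsup
  refine Finset.mem_image.mpr ⟨(k 0, k 1), Finset.mem_product.mpr ⟨?_, ?_⟩, (k_eq_v k).symm⟩
  · rw [Finset.mem_Icc]; omega
  · rw [Finset.mem_Icc]; omega

lemma sum_box_eq (m : ℕ) (f : Freq 2 → ℝ) :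
    ∑ k ∈ box m, f k
      = ∑ a ∈ Finset.Icc (-(m:ℤ)) m, ∑ b ∈ Finset.Icc (-(m:ℤ)) m, f (v a b) := by
  rw [box, Finset.sum_image, Finset.sum_product]
  intro p _ q _ h
  have := v_inj h
  exact Prod.ext this.1 this.2

lemma box_bound (hε : 0 < ε) {C₀ C₁ : ℝ} (hC₀ : ∀ x, |φ x| ≤ C₀)
    (hC₁ : ∀ x, ‖x‖ * |φ x| ≤ C₁) (M : ℕ) (hM : 1 ≤ M) (m : ℕ) :
    ∑ k ∈ box m, F φ ε k
      ≤ 12*C₀^2*(1 + Real.log M) + 12*(C₁^2/ε^2)*((M:ℝ)^2)⁻¹ := by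
  have hC₀0 : 0 ≤ C₀ := le_trans (abs_nonneg _) (hC₀ 0)
  set w : ℤ → ℝ := fun a => min (C₀^2) (C₁^2 / (ε^2 * (a:ℝ)^2)) with hw
  have hw0 : ∀ a, 0 ≤ w a := fun a => le_min (by positivity) (by positivity)
  set H : ℤ → ℤ → ℝ := fun a b => if a ≠ 0 ∧ |b| ≤ |a| then w a / (a:ℝ)^2 else 0 with hH
  have hH0 : ∀ a b, 0 ≤ H a b := by
    intro a b; rw [hH]; dsimp only; split
    · rename_i hcond
      have : ((a:ℝ))^2 ≠ 0 := by
        have : (a:ℝ) ≠ 0 := Int.cast_ne_zero.mpr hcond.1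
        positivity
      positivity
    · exact le_refl 0
  set g : ℕ → ℝ := fun n => if n = 0 then 0 else 3 * w (n:ℤ) / n with hg
  have hg0 : ∀ n, 0 ≤ g n := by
    intro n; rw [hg]; dsimp only; split
    · exact le_refl 0
    · positivity
  set R := Finset.Icc (-(m:ℤ)) m with hR
  -- pointwise bound
  have pointwise : ∀ a b : ℤ, F φ ε (v a b) ≤ H a b + H b a := by
    intro a b
    rcases le_or_gt |b| |a| with hab | hab
    · by_cases ha : a = 0
      · have hb : b = 0 := by
          subst ha; simpa using hab
        have hv : v a b = 0 := by
          subst ha; subst hb; funext i; fin_cases i <;> rfl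
        rw [F, if_pos hv]
        exact add_nonneg (hH0 _ _) (hH0 _ _)
      · have hkey := F_key φ ε hε hC₀ hC₁ (v a b) a ha
          (by rw [norm_v_sq]; nlinarith [sq_nonneg (b:ℝ)])
        have : H a b = w a / (a:ℝ)^2 := by rw [hH]; simp [ha, hab]
        rw [this]
        calc F φ ε (v a b) ≤ w a / (a:ℝ)^2 := hkey
          _ ≤ w a / (a:ℝ)^2 + H b a := le_add_of_nonneg_right (hH0 _ _)
    · have hb : b ≠ 0 := by
        intro h; subst h; rw [abs_zero] at hab; exact absurd hab (abs_nonneg a).not_gt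
      have hkey := F_key φ ε hε hC₀ hC₁ (v a b) b hb
        (by rw [norm_v_sq]; nlinarith [sq_nonneg (a:ℝ)])
      have : H b a = w b / (b:ℝ)^2 := by rw [hH]; simp [hb, le_of_lt hab]
      rw [this]
      calc F φ ε (v a b) ≤ w b / (b:ℝ)^2 := hkey
        _ ≤ H a b + w b / (b:ℝ)^2 := le_add_of_nonneg_left (hH0 _ _)
  -- inner sum bound
  have inner : ∀ a : ℤ, ∑ b ∈ R, H a b ≤ g a.natAbs := by
    intro a
    by_cases ha : a = 0
    · subst ha
      have : ∀ b ∈ R, H 0 b = 0 := by intro b _; rw [hH]; simp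
      rw [Finset.sum_congr rfl this, Finset.sum_const, smul_zero, hg]
      simp
    · have haR : ((a:ℝ)) ≠ 0 := Int.cast_ne_zero.mpr ha
      have ha1 : (1:ℝ) ≤ |(a:ℝ)| := by
        have h1 : (1:ℤ) ≤ |a| := Int.one_le_abs (by omega)
        calc (1:ℝ) ≤ ((|a| : ℤ) : ℝ) := by exact_mod_cast h1
          _ = |(a:ℝ)| := by rw [Int.cast_abs]
      have hsplit : ∑ b ∈ R, H a b = (R.filter (fun b => |b| ≤ |a|)).card • (w a / (a:ℝ)^2) := by
        rw [hH]
        simp only [ha, ne_eq, not_false_eq_true, true_and]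
        rw [← Finset.sum_filter, Finset.sum_const]
      have hcard : ((R.filter (fun b => |b| ≤ |a|)).card : ℝ) ≤ 3 * |(a:ℝ)| := by
        have hsub : R.filter (fun b => |b| ≤ |a|) ⊆ Finset.Icc (-|a|) |a| := by
          intro b hb
          rw [Finset.mem_filter] at hb
          rw [Finset.mem_Icc]
          exact abs_le.mp hb.2
        have := Finset.card_le_card hsub
        rw [Int.card_Icc] at this
        have h2 : (|a| + 1 - -|a|).toNat = 2 * a.natAbs + 1 := by
          rw [Int.abs_eq_natAbs]; omega
        rw [h2] at this
        calc ((R.filter (fun b => |b| ≤ |a|)).card : ℝ) ≤ ((2 * a.natAbs + 1 : ℕ) : ℝ) := by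
              exact_mod_cast this
          _ = 2 * |(a:ℝ)| + 1 := by
              push_cast
              rw [Nat.cast_natAbs, Int.cast_abs]
          _ ≤ 3 * |(a:ℝ)| := by linarith
      have hna : a.natAbs ≠ 0 := by omega
      have hgval : g a.natAbs = 3 * w a / |(a:ℝ)| := by
        rw [hg]
        simp only [hna, if_false]
        have h1 : ((a.natAbs : ℕ) : ℝ) = |(a:ℝ)| := by
          rw [Nat.cast_natAbs, Int.cast_abs]
        have h2 : w ((a.natAbs : ℕ) : ℤ) = w a := by
          rw [hw]
          have : (((a.natAbs : ℕ) : ℤ) : ℝ)^2 = (a:ℝ)^2 := by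
            push_cast
            exact _root_.sq_abs _
          simp only [this]
        rw [h1, h2]
      rw [hsplit, hgval, nsmul_eq_mul]
      calc ((R.filter (fun b => |b| ≤ |a|)).card : ℝ) * (w a / (a:ℝ)^2)
          ≤ (3 * |(a:ℝ)|) * (w a / (a:ℝ)^2) := by
            apply mul_le_mul_of_nonneg_right hcard
            positivity
        _ = 3 * w a / |(a:ℝ)| := by
            have hneg : -((a:ℝ)) ≠ 0 := neg_ne_zero.mpr haR
            rcases abs_cases ((a:ℝ)) with ⟨h,_⟩|⟨h,_⟩ <;> rw [h] <;>
              field_simp <;> ring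
  -- reindex a-sum to naturals
  have reindex : ∑ a ∈ R, g a.natAbs ≤ 2 * ∑ n ∈ Finset.Icc 1 m, g n := by
    set A := (Finset.Icc 0 m).image (fun n : ℕ => (n:ℤ)) with hA
    set B := (Finset.Icc 0 m).image (fun n : ℕ => -(n:ℤ)) with hB
    have hsub : R ⊆ A ∪ B := by
      intro a ha
      rw [hR, Finset.mem_Icc] at ha
      rcases le_or_gt 0 a with h | h
      · apply Finset.mem_union_left
        exact Finset.mem_image.mpr ⟨a.toNat, Finset.mem_Icc.mpr (by omega), by omega⟩
      · apply Finset.mem_union_right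
        exact Finset.mem_image.mpr ⟨(-a).toNat, Finset.mem_Icc.mpr (by omega), by omega⟩
    have hAB : ∑ a ∈ A ∪ B, g a.natAbs ≤ ∑ a ∈ A, g a.natAbs + ∑ a ∈ B, g a.natAbs := by
      have := Finset.sum_union_inter (s₁ := A) (s₂ := B) (f := fun a => g a.natAbs)
      have hnn : 0 ≤ ∑ a ∈ A ∩ B, g a.natAbs :=
        Finset.sum_nonneg (fun a _ => hg0 _)
      linarith
    have hAsum : ∑ a ∈ A, g a.natAbs = ∑ n ∈ Finset.Icc 0 m, g n := by
      rw [hA, Finset.sum_image (by intro p _ q _ h; exact Nat.cast_injective h)]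
      exact Finset.sum_congr rfl (fun n _ => by rw [Int.natAbs_natCast])
    have hBsum : ∑ a ∈ B, g a.natAbs = ∑ n ∈ Finset.Icc 0 m, g n := by
      rw [hB, Finset.sum_image (by intro p _ q _ h; simp only at h; omega)]
      exact Finset.sum_congr rfl (fun n _ => by simp)
    have h0m : ∑ n ∈ Finset.Icc 0 m, g n = ∑ n ∈ Finset.Icc 1 m, g n := by
      have : Finset.Icc 0 m = insert 0 (Finset.Icc 1 m) := by
        ext x; simp only [Finset.mem_Icc, Finset.mem_insert]; omega
      rw [this, Finset.sum_insert (by simp), hg]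
      simp
    calc ∑ a ∈ R, g a.natAbs ≤ ∑ a ∈ A ∪ B, g a.natAbs :=
          Finset.sum_le_sum_of_subset_of_nonneg hsub (fun a _ _ => hg0 _)
      _ ≤ ∑ a ∈ A, g a.natAbs + ∑ a ∈ B, g a.natAbs := hAB
      _ = 2 * ∑ n ∈ Finset.Icc 1 m, g n := by rw [hAsum, hBsum, h0m]; ring
  -- bound the natural sum
  have natsum : ∑ n ∈ Finset.Icc 1 m, g n
      ≤ 3*C₀^2*(1 + Real.log M) + 3*(C₁^2/ε^2)*((M:ℝ)^2)⁻¹ := by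
    have hpt : ∀ n ∈ Finset.Icc 1 m, g n ≤
        (if n ≤ M then 3*C₀^2 * (n:ℝ)⁻¹ else 3*(C₁^2/ε^2) * ((n:ℝ)^3)⁻¹) := by
      intro n hn
      rw [Finset.mem_Icc] at hn
      have hn0 : n ≠ 0 := by omega
      have hnR : (0:ℝ) < (n:ℝ) := by exact_mod_cast Nat.pos_of_ne_zero hn0
      rw [hg]; simp only [hn0, if_false]
      split
      · calc 3 * w (n:ℤ) / n ≤ 3 * C₀^2 / n := by
              apply div_le_div₀ (by positivity) _ hnR le_rfl
              have h := min_le_left (C₀^2) (C₁^2 / (ε^2 * ((n:ℤ):ℝ)^2))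
              rw [hw]; nlinarith
          _ = 3*C₀^2 * (n:ℝ)⁻¹ := by ring
      · have hmin : w (n:ℤ) ≤ C₁^2 / (ε^2 * (n:ℝ)^2) := by
          rw [hw]
          have := min_le_right (C₀^2) (C₁^2 / (ε^2 * (((n:ℤ)):ℝ)^2))
          push_cast at this ⊢
          exact this
        calc 3 * w (n:ℤ) / n ≤ 3 * (C₁^2 / (ε^2 * (n:ℝ)^2)) / n := by
              apply div_le_div₀ (by positivity) _ hnR le_rfl
              nlinarith
          _ = 3*(C₁^2/ε^2) * ((n:ℝ)^3)⁻¹ := by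
              simp only [div_eq_mul_inv, mul_inv]
              ring
    calc ∑ n ∈ Finset.Icc 1 m, g n
        ≤ ∑ n ∈ Finset.Icc 1 m,
            (if n ≤ M then 3*C₀^2 * (n:ℝ)⁻¹ else 3*(C₁^2/ε^2) * ((n:ℝ)^3)⁻¹) :=
          Finset.sum_le_sum hpt
      _ = ∑ n ∈ (Finset.Icc 1 m).filter (fun n => n ≤ M), 3*C₀^2 * (n:ℝ)⁻¹
          + ∑ n ∈ (Finset.Icc 1 m).filter (fun n => ¬ n ≤ M), 3*(C₁^2/ε^2) * ((n:ℝ)^3)⁻¹ :=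
          Finset.sum_ite _ _
      _ ≤ ∑ n ∈ Finset.Icc 1 M, 3*C₀^2 * (n:ℝ)⁻¹
          + ∑ n ∈ Finset.Ioc M m, 3*(C₁^2/ε^2) * ((n:ℝ)^3)⁻¹ := by
          apply add_le_add
          · apply Finset.sum_le_sum_of_subset_of_nonneg
            · intro n hn
              simp only [Finset.mem_filter, Finset.mem_Icc] at hn ⊢
              omega
            · intro n _ _; positivity
          · apply Finset.sum_le_sum_of_subset_of_nonneg
            · intro n hn
              simp only [Finset.mem_filter, Finset.mem_Icc] at hn
              simp only [Finset.mem_Ioc]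
              omega
            · intro n _ _; positivity
      _ ≤ 3*C₀^2*(1 + Real.log M) + 3*(C₁^2/ε^2)*((M:ℝ)^2)⁻¹ := by
          apply add_le_add
          · rw [← Finset.mul_sum]
            apply mul_le_mul_of_nonneg_left (harm_up M) (by positivity)
          · rw [← Finset.mul_sum]
            apply mul_le_mul_of_nonneg_left (cube_tail M hM m) (by positivity)
  -- put it together
  calc ∑ k ∈ box m, F φ ε k
      = ∑ a ∈ R, ∑ b ∈ R, F φ ε (v a b) := sum_box_eq m _
    _ ≤ ∑ a ∈ R, ∑ b ∈ R, (H a b + H b a) :=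
        Finset.sum_le_sum (fun a _ => Finset.sum_le_sum (fun b _ => pointwise a b))
    _ = ∑ a ∈ R, ∑ b ∈ R, H a b + ∑ a ∈ R, ∑ b ∈ R, H b a := by
        rw [← Finset.sum_add_distrib]
        exact Finset.sum_congr rfl (fun a _ => Finset.sum_add_distrib)
    _ = 2 * ∑ a ∈ R, ∑ b ∈ R, H a b := by
        rw [Finset.sum_comm (f := fun a b => H b a)]
        ring
    _ ≤ 2 * ∑ a ∈ R, g a.natAbs := by
        apply mul_le_mul_of_nonneg_left (Finset.sum_le_sum (fun a _ => inner a)) (by norm_num)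
    _ ≤ 2 * (2 * ∑ n ∈ Finset.Icc 1 m, g n) := by
        apply mul_le_mul_of_nonneg_left reindex (by norm_num)
    _ ≤ 2 * (2 * (3*C₀^2*(1 + Real.log M) + 3*(C₁^2/ε^2)*((M:ℝ)^2)⁻¹)) := by
        apply mul_le_mul_of_nonneg_left _ (by norm_num)
        apply mul_le_mul_of_nonneg_left natsum (by norm_num)
    _ = 12*C₀^2*(1 + Real.log M) + 12*(C₁^2/ε^2)*((M:ℝ)^2)⁻¹ := by ring

lemma global_sum_le (hε : 0 < ε) {C₀ C₁ : ℝ} (hC₀ : ∀ x, |φ x| ≤ C₀)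
    (hC₁ : ∀ x, ‖x‖ * |φ x| ≤ C₁) (M : ℕ) (hM : 1 ≤ M) (s : Finset (Freq 2)) :
    ∑ k ∈ s, F φ ε k ≤ 12*C₀^2*(1 + Real.log M) + 12*(C₁^2/ε^2)*((M:ℝ)^2)⁻¹ := by
  obtain ⟨m, hm⟩ := subset_box s
  calc ∑ k ∈ s, F φ ε k ≤ ∑ k ∈ box m, F φ ε k :=
        Finset.sum_le_sum_of_subset_of_nonneg hm (fun k _ _ => F_nonneg φ ε k)
    _ ≤ _ := box_bound φ ε hε hC₀ hC₁ M hM m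

lemma F_summable (hε : 0 < ε) {C₀ C₁ : ℝ} (hC₀ : ∀ x, |φ x| ≤ C₀)
    (hC₁ : ∀ x, ‖x‖ * |φ x| ≤ C₁) : Summable (F φ ε) :=
  summable_of_sum_le (fun k => F_nonneg φ ε k)
    (global_sum_le φ ε hε hC₀ hC₁ 1 le_rfl)

end Statement16Aux


set_option maxHeartbeats 2000000 in
open Statement16Aux in
open PaperDefs in
/-- for a Schwartz function `ψ̂` with `ψ̂(0) = 1`, the constants
`σ_ε = Σ_{k≠0} ψ̂(εk)²/|k|²` satisfy `σ_ε ≍ |log ε|` as `ε → 0`: there are `0 < c < C`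
such that `c |log ε| ≤ σ_ε ≤ C |log ε|` for all sufficiently small `ε > 0`. -/
theorem statement16 (φ : SchwartzMap (EuclideanSpace ℝ (Fin 2)) ℝ) (hφ0 : φ 0 = 1) :
    ∃ c C : ℝ, 0 < c ∧ c < C ∧ ∃ ε₀ : ℝ, 0 < ε₀ ∧ ∀ ε : ℝ, 0 < ε → ε ≤ ε₀ →
      c * |Real.log ε| ≤ sigmaEps (fun x => φ x) ε ∧
      sigmaEps (fun x => φ x) ε ≤ C * |Real.log ε| := by
  classical
  obtain ⟨C₀, hC₀pos, hC₀'⟩ := φ.decay 0 0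
  have hC₀ : ∀ x, |φ x| ≤ C₀ := by
    intro x
    have h := hC₀' x
    simpa [norm_iteratedFDeriv_zero, Real.norm_eq_abs] using h
  obtain ⟨C₁, hC₁pos, hC₁'⟩ := φ.decay 1 0
  have hC₁ : ∀ x, ‖x‖ * |φ x| ≤ C₁ := by
    intro x
    have h := hC₁' x
    simpa [norm_iteratedFDeriv_zero, Real.norm_eq_abs] using h
  -- continuity at 0
  have hcont : ∀ᶠ x in nhds (0 : EuclideanSpace ℝ (Fin 2)), (1:ℝ)/2 < φ x := by
    have h : ContinuousAt φ 0 := φ.continuous.continuousAt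
    exact h.eventually (eventually_gt_nhds (by rw [hφ0]; norm_num))
  rw [Metric.eventually_nhds_iff] at hcont
  obtain ⟨δ, hδ, hball⟩ := hcont
  set r := δ/2 with hrdef
  have hr : 0 < r := by positivity
  have hφhalf : ∀ x : EuclideanSpace ℝ (Fin 2), ‖x‖ ≤ r → (1:ℝ)/2 ≤ φ x := by
    intro x hx
    have hd : dist x 0 < δ := by
      rw [dist_zero_right]
      calc ‖x‖ ≤ r := hx
        _ < δ := by rw [hrdef]; linarith
    exact (hball hd).le
  have hlog2 : (0:ℝ) ≤ Real.log 2 := Real.log_nonneg one_le_two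
  set L₀ := 2*|Real.log (r/2)| + 2 with hL₀def
  have hL₀pos : 0 < L₀ := by positivity
  refine ⟨1/16, 12*C₀^2*(1+Real.log 2) + 12*C₀^2 + 12*C₁^2 + 1, by norm_num, ?_,
    min (Real.exp (-L₀)) (r/2), lt_min (Real.exp_pos _) (by positivity), ?_⟩
  · nlinarith [sq_nonneg C₀, sq_nonneg C₁]
  intro ε hε hεle
  have hεr : ε ≤ r/2 := le_trans hεle (min_le_right _ _)
  have hεexp : ε ≤ Real.exp (-L₀) := le_trans hεle (min_le_left _ _)
  have hlogε : Real.log ε ≤ -L₀ := by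
    have h := Real.log_le_log hε hεexp
    rwa [Real.log_exp] at h
  set L := -Real.log ε with hLdef
  have hLge : L₀ ≤ L := by rw [hLdef]; linarith
  have hL1 : (1:ℝ) ≤ L := by
    have := abs_nonneg (Real.log (r/2))
    rw [hL₀def] at hLge; linarith
  have hLabs : |Real.log ε| = L := by
    rw [hLdef, abs_of_neg (by linarith : Real.log ε < 0)]
  have hε1 : ε ≤ 1 := by
    calc ε ≤ Real.exp (-L₀) := hεexp
      _ ≤ Real.exp 0 := Real.exp_le_exp.mpr (by linarith)
      _ = 1 := Real.exp_zero
  have hsum : Summable (F φ ε) := F_summable φ ε hε hC₀ hC₁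
  rw [sigma_eq φ ε, hLabs]
  constructor
  · -- LOWER BOUND
    set N := ⌊r/(2*ε)⌋₊ with hNdef
    have h2ε : (0:ℝ) < 2*ε := by linarith
    have hrε : (1:ℝ) ≤ r/(2*ε) := by
      rw [le_div_iff₀ h2ε]; linarith
    have hN1 : 1 ≤ N := Nat.le_floor (by exact_mod_cast hrε)
    have hNle : (N:ℝ) ≤ r/(2*ε) := Nat.floor_le (by positivity)
    have hNlt : r/(2*ε) < (N:ℝ)+1 := Nat.lt_floor_add_one _
    have hεN : ε*(N:ℝ) ≤ r/2 := by
      have h' : (N:ℝ) ≤ (r/2)/ε := by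
        rw [show (r/2)/ε = r/(2*ε) from by ring]; exact hNle
      calc ε*(N:ℝ) = (N:ℝ)*ε := by ring
        _ ≤ r/2 := (le_div_iff₀ hε).mp h'
    -- per-term lower bound
    have per : ∀ a b : ℕ, 1 ≤ b → b ≤ a → a ≤ N →
        (8*(a:ℝ)^2)⁻¹ ≤ F φ ε (v (a:ℤ) (b:ℤ)) := by
      intro a b hb hba haN
      have ha1 : 1 ≤ a := le_trans hb hba
      have haR : (0:ℝ) < (a:ℝ) := by exact_mod_cast Nat.pos_of_ne_zero (by omega)
      have hbR : (0:ℝ) ≤ (b:ℝ) := Nat.cast_nonneg b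
      have hbaR : (b:ℝ) ≤ (a:ℝ) := by exact_mod_cast hba
      have haNR : (a:ℝ) ≤ (N:ℝ) := by exact_mod_cast haN
      have hk0 : v (a:ℤ) (b:ℤ) ≠ 0 := v_ne_zero (by exact_mod_cast (by omega : a ≠ 0))
      have hnorm2 : ‖toR (v (a:ℤ) (b:ℤ))‖^2 = (a:ℝ)^2 + (b:ℝ)^2 := by
        rw [norm_v_sq]; push_cast; ring
      have hub : (a:ℝ)^2 + (b:ℝ)^2 ≤ 2*(a:ℝ)^2 := by nlinarith
      have hεa : ε*(a:ℝ) ≤ r/2 := by nlinarith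
      have hεb : ε*(b:ℝ) ≤ r/2 := by nlinarith
      have hxr : ‖ε • toR (v (a:ℤ) (b:ℤ))‖ ≤ r := by
        have h1 : ‖ε • toR (v (a:ℤ) (b:ℤ))‖^2 = ε^2 * ((a:ℝ)^2+(b:ℝ)^2) := by
          rw [norm_smul, mul_pow, Real.norm_eq_abs, _root_.sq_abs, hnorm2]
        have h2 : ε^2 * ((a:ℝ)^2+(b:ℝ)^2) ≤ r^2 := by
          nlinarith [mul_nonneg hε.le hbR, mul_nonneg hε.le haR.le]
        calc ‖ε • toR (v (a:ℤ) (b:ℤ))‖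
            = Real.sqrt (‖ε • toR (v (a:ℤ) (b:ℤ))‖^2) := (Real.sqrt_sq (norm_nonneg _)).symm
          _ ≤ Real.sqrt (r^2) := Real.sqrt_le_sqrt (by rw [h1]; exact h2)
          _ = r := Real.sqrt_sq hr.le
      have hφv : (1:ℝ)/2 ≤ φ (ε • toR (v (a:ℤ) (b:ℤ))) := hφhalf _ hxr
      have hφ2 : (1:ℝ)/4 ≤ (φ (ε • toR (v (a:ℤ) (b:ℤ))))^2 := by nlinarith
      rw [F, if_neg hk0, hnorm2]
      have hre : ((8:ℝ)*(a:ℝ)^2)⁻¹ = (1/4)/(2*(a:ℝ)^2) := by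
        field_simp
        ring
      rw [hre]
      exact div_le_div₀ (sq_nonneg _) hφ2 (by positivity) hub
    -- sum over the triangle
    set sN := ((Finset.Icc 1 N) ×ˢ (Finset.Icc 1 N)).image
      (fun p : ℕ×ℕ => v (p.1:ℤ) (p.2:ℤ)) with hsNdef
    have hs_eq : ∑ k ∈ sN, F φ ε k
        = ∑ a ∈ Finset.Icc 1 N, ∑ b ∈ Finset.Icc 1 N, F φ ε (v (a:ℤ) (b:ℤ)) := by
      rw [hsNdef, Finset.sum_image, Finset.sum_product]
      intro p _ q _ h
      have h' := v_inj h
      exact Prod.ext (by exact_mod_cast h'.1) (by exact_mod_cast h'.2)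
    have hchain : (1/8) * Real.log ((N:ℝ)+1) ≤ ∑ k ∈ sN, F φ ε k := by
      rw [hs_eq]
      have step1 : ∑ a ∈ Finset.Icc 1 N, (8*(a:ℝ))⁻¹
          ≤ ∑ a ∈ Finset.Icc 1 N, ∑ b ∈ Finset.Icc 1 N, F φ ε (v (a:ℤ) (b:ℤ)) := by
        apply Finset.sum_le_sum
        intro a ha
        rw [Finset.mem_Icc] at ha
        have haR : (0:ℝ) < (a:ℝ) := by exact_mod_cast Nat.pos_of_ne_zero (by omega)
        calc (8*(a:ℝ))⁻¹ = ∑ _b ∈ Finset.Icc 1 a, (8*(a:ℝ)^2)⁻¹ := by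
              rw [Finset.sum_const, Nat.card_Icc]
              simp only [Nat.add_sub_cancel, nsmul_eq_mul]
              field_simp
          _ ≤ ∑ b ∈ Finset.Icc 1 a, F φ ε (v (a:ℤ) (b:ℤ)) := by
              apply Finset.sum_le_sum
              intro b hb
              rw [Finset.mem_Icc] at hb
              exact per a b hb.1 hb.2 ha.2
          _ ≤ ∑ b ∈ Finset.Icc 1 N, F φ ε (v (a:ℤ) (b:ℤ)) := by
              apply Finset.sum_le_sum_of_subset_of_nonneg
              · exact Finset.Icc_subset_Icc le_rfl ha.2
              · intro b _ _; exact F_nonneg φ ε _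
      have step2 : (1/8) * Real.log ((N:ℝ)+1) ≤ ∑ a ∈ Finset.Icc 1 N, (8*(a:ℝ))⁻¹ := by
        have he : ∀ a ∈ Finset.Icc 1 N, (8*(a:ℝ))⁻¹ = (1/8) * (a:ℝ)⁻¹ :=
          fun a _ => by rw [mul_inv]; ring
        rw [Finset.sum_congr rfl he, ← Finset.mul_sum]
        exact mul_le_mul_of_nonneg_left (harm_low N) (by norm_num)
      linarith
    have hNlog : L/2 ≤ Real.log ((N:ℝ)+1) := by
      have hpos : (0:ℝ) < r/(2*ε) := by positivity
      have h1 : Real.log (r/(2*ε)) ≤ Real.log ((N:ℝ)+1) :=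
        Real.log_le_log hpos (le_of_lt hNlt)
      have h2 : Real.log (r/(2*ε)) = Real.log (r/2) + L := by
        rw [show r/(2*ε) = (r/2)/ε from by ring,
          Real.log_div (by positivity) (ne_of_gt hε), hLdef]
        ring
      have h3 : -|Real.log (r/2)| ≤ Real.log (r/2) := neg_abs_le _
      rw [hL₀def] at hLge
      linarith
    calc (1/16) * L = (1/8) * (L/2) := by ring
      _ ≤ (1/8) * Real.log ((N:ℝ)+1) := by linarith
      _ ≤ ∑ k ∈ sN, F φ ε k := hchain
      _ ≤ ∑' k, F φ ε k := Summable.sum_le_tsum sN (fun k _ => F_nonneg φ ε k) hsum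
  · -- UPPER BOUND
    set M := ⌈1/ε⌉₊ with hMdef
    have hM1 : 1 ≤ M := Nat.one_le_ceil_iff.mpr (by positivity)
    have hM0 : (0:ℝ) < (M:ℝ) := by exact_mod_cast Nat.pos_of_ne_zero (by omega)
    have hMge : 1/ε ≤ (M:ℝ) := Nat.le_ceil _
    have hMle : (M:ℝ) ≤ 2/ε := by
      have h1 : (M:ℝ) < 1/ε + 1 := Nat.ceil_lt_add_one (by positivity)
      have h2 : (1:ℝ) ≤ 1/ε := by
        rw [le_div_iff₀ hε]; linarith
      have h3 : (2:ℝ)/ε = 2*(1/ε) := by ring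
      rw [h3]; linarith
    have hup : ∑' k, F φ ε k
        ≤ 12*C₀^2*(1 + Real.log M) + 12*(C₁^2/ε^2)*((M:ℝ)^2)⁻¹ :=
      Summable.tsum_le_of_sum_le hsum (global_sum_le φ ε hε hC₀ hC₁ M hM1)
    have hlogM : Real.log M ≤ Real.log 2 + L := by
      have h1 : Real.log M ≤ Real.log (2/ε) := Real.log_le_log hM0 hMle
      rw [Real.log_div two_ne_zero (ne_of_gt hε)] at h1
      rw [hLdef]; linarith
    have hterm2 : 12*(C₁^2/ε^2)*((M:ℝ)^2)⁻¹ ≤ 12*C₁^2 := by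
      have h3 : (1/ε)^2 ≤ (M:ℝ)^2 := pow_le_pow_left₀ (by positivity) hMge 2
      have h4 : (ε^2)⁻¹ ≤ (M:ℝ)^2 := by
        calc (ε^2)⁻¹ = (1/ε)^2 := by field_simp
          _ ≤ (M:ℝ)^2 := h3
      have h2 : ((M:ℝ)^2)⁻¹ ≤ ε^2 := by
        calc ((M:ℝ)^2)⁻¹ ≤ ((ε^2)⁻¹)⁻¹ := by
              apply inv_anti₀ (by positivity) h4
          _ = ε^2 := inv_inv _
      calc 12*(C₁^2/ε^2)*((M:ℝ)^2)⁻¹ ≤ 12*(C₁^2/ε^2)*ε^2 :=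
            mul_le_mul_of_nonneg_left h2 (by positivity)
        _ = 12*C₁^2 := by field_simp
    have hA : (0:ℝ) ≤ 12*C₀^2*(1+Real.log 2) := by nlinarith [sq_nonneg C₀]
    have t1 : (0:ℝ) ≤ (12*C₀^2*(1+Real.log 2)) * (L-1) := mul_nonneg hA (by linarith)
    have t2 : (0:ℝ) ≤ (12*C₁^2)*(L-1) := mul_nonneg (by positivity) (by linarith)
    calc ∑' k, F φ ε k
        ≤ 12*C₀^2*(1 + Real.log M) + 12*(C₁^2/ε^2)*((M:ℝ)^2)⁻¹ := hup
      _ ≤ 12*C₀^2*(1 + (Real.log 2 + L)) + 12*C₁^2 := by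
          apply add_le_add _ hterm2
          apply mul_le_mul_of_nonneg_left _ (by positivity)
          linarith
      _ ≤ (12*C₀^2*(1+Real.log 2) + 12*C₀^2 + 12*C₁^2 + 1) * L := by nlinarith [t1, t2, hL1]
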